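/- Let s ∈ (3/4,1) and 2 < p < (3+2s)/(3−2s), with constant potential V ≡ 1. For every u ∈ M one has I(u) > (2s(p−2)/(6s−3))·(1/(p+1))∫_{ℝ³} |u|^{p+1} dx > 0; in particular I is strictly positive on M. -/

import Mathlib

/-! Subtracting `G(u) = 0` from `(6s-3) I(u)` eliminates the Gagliardo and Poisson terms:
`(6s-3) I(u) = s ∫u² + 2s(p-2)/(p+1) ∫|u|^{p+1}`. For `u ≠ 0` the `L²` term is positive,
and `G(u) = 0` also forces `∫|u|^{p+1} > 0`, since all other terms of `G` are nonnegative. -/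

open MeasureTheory Real Filter

noncomputable section

abbrev R3 := EuclideanSpace ℝ (Fin 3)

/-- The standard normalizing constant `C(3,s)` of the fractional Laplacian. -/
def fracC (s : ℝ) : ℝ :=
  (∫ z : R3, (1 - Real.cos (z 0)) / ‖z‖ ^ (3 + 2 * s))⁻¹

/-- The Gagliardo bilinear energy `E_s(u,v)`. -/
def Es (s : ℝ) (u v : R3 → ℝ) : ℝ :=
  (fracC s / 2) *
    ∫ q : R3 × R3, (u q.1 - u q.2) * (v q.1 - v q.2) / ‖q.1 - q.2‖ ^ (3 + 2 * s)

/-- Finiteness of the Gagliardo seminorm. -/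
def GagliardoFinite (s : ℝ) (u : R3 → ℝ) : Prop :=
  Integrable (fun q : R3 × R3 => (u q.1 - u q.2) ^ 2 / ‖q.1 - q.2‖ ^ (3 + 2 * s))

/-- Membership in the fractional Sobolev space `H^s(ℝ³)`. -/
def MemHs (s : ℝ) (u : R3 → ℝ) : Prop :=
  MemLp u 2 volume ∧ GagliardoFinite s u

/-- The `H^s(ℝ³)` norm. -/
def HsNorm (s : ℝ) (u : R3 → ℝ) : ℝ :=
  Real.sqrt ((∫ x, u x ^ 2) + Es s u u)

/-- The constant `c_s` of the Riesz potential. -/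
def rieszC (s : ℝ) : ℝ :=
  Real.pi ^ (-(3:ℝ)/2) * (2:ℝ) ^ (-(2*s)) * Real.Gamma (3 - 2*s) / Real.Gamma s

/-- The Riesz potential `φ_u` solving `(-Δ)^s φ = u²`. -/
def phiu (s : ℝ) (u : R3 → ℝ) (x : R3) : ℝ :=
  rieszC s * ∫ y, u y ^ 2 / ‖x - y‖ ^ (3 - 2*s)

/-- The energy functional `I` with constant potential `V ≡ 1`. -/
def Ifun (s p : ℝ) (u : R3 → ℝ) : ℝ :=
  (1/2) * Es s u u + (1/2) * (∫ x, u x ^ 2)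
    + (1/4) * (∫ x, phiu s u x * u x ^ 2) - (1/(p+1)) * ∫ x, |u x| ^ (p+1)

/-- The functional `G` defining the Pohozaev–Nehari manifold `M`. -/
def Gfun (s p : ℝ) (u : R3 → ℝ) : ℝ :=
  (6*s-3)/2 * Es s u u + (4*s-3)/2 * (∫ x, u x ^ 2)
    + (6*s-3)/4 * (∫ x, phiu s u x * u x ^ 2)
    - (2*s*(p+1)-3)/(p+1) * ∫ x, |u x| ^ (p+1)

/-- Membership in the Pohozaev–Nehari manifold `M = {u ∈ H^s∖{0} : G(u) = 0}`. -/
def InM (s p : ℝ) (u : R3 → ℝ) : Prop :=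
  MemHs s u ∧ ¬ (u =ᵐ[volume] 0) ∧ Gfun s p u = 0

/-- The scaling `u_θ(x) = θ^{2s} u(θ x)`. -/
def scaleHs (s : ℝ) (u : R3 → ℝ) (θ : ℝ) : R3 → ℝ :=
  fun x => θ ^ (2*s) * u (θ • x)

theorem integral_sq_pos_of_not_ae_eq_zero {α : Type*} [MeasurableSpace α] {μ : Measure α}
    {u : α → ℝ} (hu : Integrable (fun x => u x ^ 2) μ) (hne : ¬ u =ᵐ[μ] 0) :
    0 < ∫ x, u x ^ 2 ∂μ := by
  refine (integral_nonneg fun x => sq_nonneg (u x)).lt_of_ne fun h => hne ?_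
  filter_upwards [(integral_eq_zero_iff_of_nonneg (fun x => sq_nonneg (u x)) hu).mp h.symm]
    with x hx
  exact pow_eq_zero_iff two_ne_zero |>.mp hx

theorem fracC_nonneg (s : ℝ) : 0 ≤ fracC s :=
  inv_nonneg.mpr <| integral_nonneg fun z =>
    div_nonneg (sub_nonneg.mpr (Real.cos_le_one _)) (by positivity)

theorem Es_self_nonneg (s : ℝ) (u : R3 → ℝ) : 0 ≤ Es s u u :=
  mul_nonneg (div_nonneg (fracC_nonneg s) zero_le_two) <| integral_nonneg fun q =>
    div_nonneg (mul_self_nonneg _) (by positivity)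

theorem rieszC_pos {s : ℝ} (hs₀ : 0 < s) (hs₁ : s < 3/2) : 0 < rieszC s := by
  have := Real.Gamma_pos_of_pos hs₀
  have := Real.Gamma_pos_of_pos (show 0 < 3 - 2*s by linarith)
  unfold rieszC
  positivity

theorem integral_phiu_mul_sq_nonneg {s : ℝ} (hs₀ : 0 < s) (hs₁ : s < 3/2) (u : R3 → ℝ) :
    0 ≤ ∫ x, phiu s u x * u x ^ 2 :=
  integral_nonneg fun _ => mul_nonneg
    (mul_nonneg (rieszC_pos hs₀ hs₁).le (integral_nonneg fun _ => by positivity)) (sq_nonneg _)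

theorem mul_Ifun_eq_Gfun_add (s p : ℝ) (u : R3 → ℝ) :
    (6*s-3) * Ifun s p u = Gfun s p u + s * (∫ x, u x ^ 2)
      + 2*s*(p-2) * ((1/(p+1)) * ∫ x, |u x| ^ (p+1)) := by
  unfold Ifun Gfun
  ring

theorem integral_abs_rpow_pos_of_Gfun_eq_zero {s p : ℝ} (hs₀ : 3/4 < s) (hs₁ : s < 3/2)
    {u : R3 → ℝ} (hu : Integrable (fun x => u x ^ 2)) (hne : ¬ u =ᵐ[volume] 0)
    (hG : Gfun s p u = 0) : 0 < ∫ x, |u x| ^ (p+1) := by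
  have hE := Es_self_nonneg s u
  have hA := integral_sq_pos_of_not_ae_eq_zero hu hne
  have hB := integral_phiu_mul_sq_nonneg (by linarith) hs₁ u
  have hC : 0 ≤ ∫ x, |u x| ^ (p+1) := integral_nonneg fun _ => by positivity
  have hbalance : 0 < (2*s*(p+1)-3)/(p+1) * ∫ x, |u x| ^ (p+1) := by
    unfold Gfun at hG
    nlinarith
  refine hC.lt_of_ne fun h => ?_
  rw [← h, mul_zero] at hbalance
  exact lt_irrefl 0 hbalance

/-- Lemma 3.2 (3): `I` is strictly positive on `M`; in fact
`I(u) > (2s(p-2)/(6s-3))·(1/(p+1))∫|u|^{p+1} > 0` for `u ∈ M`. -/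
theorem I_positive_on_M (s p : ℝ) (hs : 3/4 < s ∧ s < 1)
    (hp : 2 < p ∧ p < (3 + 2*s)/(3 - 2*s))
    (u : R3 → ℝ) (hu : InM s p u) :
    (2*s*(p-2)/(6*s-3)) * ((1/(p+1)) * ∫ x, |u x| ^ (p+1)) < Ifun s p u ∧
    0 < (2*s*(p-2)/(6*s-3)) * ((1/(p+1)) * ∫ x, |u x| ^ (p+1)) := by
  obtain ⟨hs₀, hs₁⟩ := hs
  obtain ⟨⟨huL2, -⟩, hne, hG⟩ := hu
  have hA := integral_sq_pos_of_not_ae_eq_zero huL2.integrable_sq hne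
  have hC := integral_abs_rpow_pos_of_Gfun_eq_zero hs₀ (by linarith) huL2.integrable_sq hne hG
  have h63 : 0 < 6*s - 3 := by linarith
  have hp₀ : 0 < p - 2 := by linarith [hp.1]
  have hp₁ : 0 < p + 1 := by linarith
  have hT : 0 < (2*s*(p-2)/(6*s-3)) * ((1/(p+1)) * ∫ x, |u x| ^ (p+1)) := by positivity
  refine ⟨?_, hT⟩
  have hI := mul_Ifun_eq_Gfun_add s p u
  rw [hG, zero_add] at hI
  rw [← mul_lt_mul_iff_right₀ h63, hI, ← mul_assoc, mul_div_cancel₀ _ h63.ne']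
  nlinarith

end
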